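/- In the two-candidate reduced instance: if there exists W ⊆ V \ {u_1} such that candidate 1 uniquely wins the election restricted to W, then there exists a set B ⊆ {1, …, m} such that candidate 1 uniquely wins the election restricted to {v_i : i ∈ B} (i.e., any successful deletion set can be replaced by one consisting only of vertices from {v_1, …, v_m}). -/

import Mathlib

/-- Vertices of the two-candidate reduced instance: the path vertices
`u_1, …, u_{ℓ(3m−1)}` (0-indexed as `u i` for `i : Fin (ℓ * (3 * m - 1))`, so `u_1` is
`u ⟨0, _⟩`), the vertex `r`, the vertices `v_1, …, v_m`, and the vertices `w_{j,k}` for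
`j ∈ [m]`, `k ∈ [3ℓ]` (both 0-indexed). -/
inductive V2 (ℓ m : ℕ) : Type
  | u (i : Fin (ℓ * (3 * m - 1))) : V2 ℓ m
  | r : V2 ℓ m
  | v (i : Fin m) : V2 ℓ m
  | w (j : Fin m) (k : Fin (3 * ℓ)) : V2 ℓ m
  deriving DecidableEq

/-- Base edge relation of the two-candidate reduced instance: `u_i ~ u_{i+1}`,
`u_{ℓ(3m−1)} ~ r`, `r ~ v_i` for all `i`, and `v_i ~ w_{j,k}` iff `k ∈ S i`. -/
def baseRel2 (ℓ m : ℕ) (S : Fin m → Finset (Fin (3 * ℓ))) :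
    V2 ℓ m → V2 ℓ m → Prop
  | .u i, .u i' => (i : ℕ) + 1 = (i' : ℕ)
  | .u i, .r => (i : ℕ) + 1 = ℓ * (3 * m - 1)
  | .r, .v _ => True
  | .v i, .w _ k => k ∈ S i
  | _, _ => False

/-- The graph of the two-candidate reduced instance. -/
def G2 (ℓ m : ℕ) (S : Fin m → Finset (Fin (3 * ℓ))) : SimpleGraph (V2 ℓ m) :=
  SimpleGraph.fromRel (baseRel2 ℓ m S)

/-- The voting function of the two-candidate reduced instance: `u`'s and `v`'s vote for
candidate `0`; `r` and the `w`'s vote for candidate `1`. -/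
def τ2 (ℓ m : ℕ) : V2 ℓ m → Fin 2
  | .u _ => 0
  | .r => 1
  | .v _ => 0
  | .w _ _ => 1

/-- The distinguished vertex `x = u_1`. -/
def x2 (ℓ m : ℕ) (h : 0 < ℓ * (3 * m - 1)) : V2 ℓ m := V2.u ⟨0, h⟩

/-- `HW G W x`: the set of vertices reachable from `x` in the subgraph of `G` induced on
the complement of `W` (each step of a connecting walk must avoid `W`). -/
def HW {V : Type*} (G : SimpleGraph V) (W : Set V) (x : V) : Set V :=
  {z | Relation.ReflTransGen (fun a b => G.Adj a b ∧ a ∉ W ∧ b ∉ W) x z}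

/-- With two candidates, candidate `1` uniquely wins the election restricted to `W` iff
`|H_W ∩ τ⁻¹(1)| > |H_W ∩ τ⁻¹(0)|`. -/
def wins2 (ℓ m : ℕ) (S : Fin m → Finset (Fin (3 * ℓ))) (x : V2 ℓ m)
    (W : Set (V2 ℓ m)) : Prop :=
  (HW (G2 ℓ m S) W x ∩ τ2 ℓ m ⁻¹' {0}).ncard <
    (HW (G2 ℓ m S) W x ∩ τ2 ℓ m ⁻¹' {1}).ncard

/- ## Auxiliary material -/

private def V2.toSum (ℓ m : ℕ) :
    V2 ℓ m → (Fin (ℓ * (3 * m - 1)) ⊕ Unit ⊕ Fin m ⊕ Fin m × Fin (3 * ℓ))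
  | .u i => .inl i
  | .r => .inr (.inl ())
  | .v i => .inr (.inr (.inl i))
  | .w j k => .inr (.inr (.inr (j, k)))

instance (ℓ m : ℕ) : Finite (V2 ℓ m) :=
  Finite.of_injective (V2.toSum ℓ m) (by
    intro a b h; cases a <;> cases b <;> simp_all [V2.toSum])

private lemma HW_not_mem {V : Type*} {G : SimpleGraph V} {W : Set V} {x : V}
    (hx : x ∉ W) {z : V} (hz : z ∈ HW G W x) : z ∉ W := by
  induction hz with
  | refl => exact hx
  | tail _ hstep _ => exact hstep.2.2

private lemma HW_mono {V : Type*} (G : SimpleGraph V) {W W' : Set V} (h : W' ⊆ W)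
    (x : V) : HW G W x ⊆ HW G W' x := fun _ hz =>
  Relation.ReflTransGen.mono
    (fun _ _ hab => ⟨hab.1, fun h' => hab.2.1 (h h'), fun h' => hab.2.2 (h h')⟩) _ _ hz

section Aux

variable {ℓ m : ℕ} {S : Fin m → Finset (Fin (3 * ℓ))} {W : Set (V2 ℓ m)}
  {h : 0 < ℓ * (3 * m - 1)}

/-- The main structural invariant: everything reachable from `u_0` is either a path
vertex `u i` with the whole prefix avoiding `W`, or else all of the path and `r` avoid
`W` and `r` is reachable. -/
private lemma reach_inv (hx : x2 ℓ m h ∉ W) {z : V2 ℓ m}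
    (hz : z ∈ HW (G2 ℓ m S) W (x2 ℓ m h)) :
    (∃ i, z = V2.u i ∧ ∀ j : Fin (ℓ * (3 * m - 1)), (j : ℕ) ≤ (i : ℕ) → V2.u j ∉ W) ∨
    ((∀ j, V2.u j ∉ W) ∧ V2.r ∉ W ∧ V2.r ∈ HW (G2 ℓ m S) W (x2 ℓ m h)) := by
  induction hz with
  | refl =>
    left
    exact ⟨⟨0, h⟩, rfl, fun j hj => by
      have hj' : (j : ℕ) ≤ 0 := by simpa using hj
      have : j = ⟨0, h⟩ := Fin.ext (by simpa using hj')
      rw [this]; exact hx⟩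
  | @tail b c hb hstep ih =>
    obtain ⟨hadj, hbW, hcW⟩ := id hstep
    rcases ih with ⟨i, rfl, hpre⟩ | hfull
    · rw [G2, SimpleGraph.fromRel_adj] at hadj
      obtain ⟨hne, hrel⟩ := hadj
      cases c with
      | u i' =>
        left
        refine ⟨i', rfl, fun j hj => ?_⟩
        simp only [baseRel2] at hrel
        rcases hrel with h1 | h1
        · by_cases hji : (j : ℕ) ≤ (i : ℕ)
          · exact hpre j hji
          · have : j = i' := Fin.ext (by omega)
            rw [this]; exact hcW
        · exact hpre j (by omega)
      | r =>
        simp only [baseRel2] at hrel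
        rcases hrel with h1 | h1
        · exact Or.inr ⟨fun j => hpre j (by omega), hcW,
            Relation.ReflTransGen.tail hb hstep⟩
        · exact absurd h1 (by simp)
      | v i' => simp only [baseRel2] at hrel; exact absurd hrel (by simp)
      | w j' k' => simp only [baseRel2] at hrel; exact absurd hrel (by simp)
    · exact Or.inr hfull

private lemma u_mem (hU : ∀ j, V2.u j ∉ W) (i : Fin (ℓ * (3 * m - 1))) :
    V2.u i ∈ HW (G2 ℓ m S) W (x2 ℓ m h) := by
  obtain ⟨n, hn⟩ := i
  induction n with
  | zero => exact Relation.ReflTransGen.refl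
  | succ n ih =>
    refine Relation.ReflTransGen.tail (ih (by omega)) ⟨?_, hU _, hU _⟩
    rw [G2, SimpleGraph.fromRel_adj]
    constructor
    · simp only [ne_eq, V2.u.injEq, Fin.mk.injEq]; omega
    · left; simp only [baseRel2]

private lemma r_mem (hU : ∀ j, V2.u j ∉ W) (hr : V2.r ∉ W) :
    V2.r ∈ HW (G2 ℓ m S) W (x2 ℓ m h) := by
  refine Relation.ReflTransGen.tail (u_mem hU ⟨ℓ * (3 * m - 1) - 1, by omega⟩)
    ⟨?_, hU _, hr⟩
  rw [G2, SimpleGraph.fromRel_adj]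
  refine ⟨by simp, Or.inl ?_⟩
  simp only [baseRel2]; omega

private lemma v_mem (hU : ∀ j, V2.u j ∉ W) (hr : V2.r ∉ W) {i : Fin m}
    (hv : V2.v i ∉ W) : V2.v i ∈ HW (G2 ℓ m S) W (x2 ℓ m h) := by
  refine Relation.ReflTransGen.tail (r_mem hU hr) ⟨?_, hr, hv⟩
  rw [G2, SimpleGraph.fromRel_adj]
  exact ⟨by simp, Or.inl trivial⟩

end Aux

/-- Any successful deletion set can be replaced by one consisting only of vertices from
`{v_1, …, v_m}`. -/
theorem wins_by_v_vertices_only (ℓ m : ℕ) (hℓ : 1 ≤ ℓ) (hm : 1 ≤ m)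
    (S : Fin m → Finset (Fin (3 * ℓ)))
    (hS3 : ∀ i, (S i).card = 3)
    (hcov : Finset.univ.biUnion S = Finset.univ)
    (hex : ∃ W : Set (V2 ℓ m), x2 ℓ m (Nat.mul_pos hℓ (by omega)) ∉ W ∧
      wins2 ℓ m S (x2 ℓ m (Nat.mul_pos hℓ (by omega))) W) :
    ∃ B : Set (Fin m),
      wins2 ℓ m S (x2 ℓ m (Nat.mul_pos hℓ (by omega))) {z | ∃ i ∈ B, z = V2.v i} := by
  obtain ⟨W, hxW, hwin⟩ := hex
  have h : 0 < ℓ * (3 * m - 1) := Nat.mul_pos hℓ (by omega)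
  set x := x2 ℓ m (Nat.mul_pos hℓ (by omega : 0 < 3 * m - 1)) with hxdef
  -- the set of reachable 1-voters is nonempty
  have hne : (HW (G2 ℓ m S) W x ∩ τ2 ℓ m ⁻¹' {1}).Nonempty := by
    apply Set.nonempty_of_ncard_ne_zero
    have := hwin
    unfold wins2 at this
    omega
  obtain ⟨z, hzH, hz1⟩ := hne
  -- hence `r` is reachable, so no `u` and not `r` is in `W`
  have hinv := reach_inv (h := h) hxW hzH
  have hfull : (∀ j, V2.u j ∉ W) ∧ V2.r ∉ W := by
    rcases hinv with ⟨i, rfl, _⟩ | hfull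
    · exact absurd hz1 (by simp [τ2])
    · exact ⟨hfull.1, hfull.2.1⟩
  obtain ⟨hU, hr⟩ := hfull
  refine ⟨{i | V2.v i ∈ W}, ?_⟩
  set W' : Set (V2 ℓ m) := {z | ∃ i ∈ {i | V2.v i ∈ W}, z = V2.v i} with hW'def
  have hW'sub : W' ⊆ W := by rintro z ⟨i, hi, rfl⟩; exact hi
  have hxW' : x ∉ W' := by
    rintro ⟨i, hi, hx⟩
    simp [hxdef, x2] at hx
  have hmono : HW (G2 ℓ m S) W x ⊆ HW (G2 ℓ m S) W' x := HW_mono _ hW'sub x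
  have hzero : HW (G2 ℓ m S) W' x ∩ τ2 ℓ m ⁻¹' {0} =
      HW (G2 ℓ m S) W x ∩ τ2 ℓ m ⁻¹' {0} := by
    apply Set.Subset.antisymm
    · rintro z ⟨hzH', hz0⟩
      refine ⟨?_, hz0⟩
      cases z with
      | u i => exact u_mem (h := h) hU i
      | r => exact absurd hz0 (by simp [τ2])
      | v i =>
        have hnz : V2.v i ∉ W' := HW_not_mem hxW' hzH'
        have hvW : V2.v i ∉ W := fun hmem => hnz ⟨i, hmem, rfl⟩
        exact v_mem (h := h) hU hr hvW
      | w j k => exact absurd hz0 (by simp [τ2])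
    · exact fun z hz => ⟨hmono hz.1, hz.2⟩
  have hones : (HW (G2 ℓ m S) W x ∩ τ2 ℓ m ⁻¹' {1}).ncard ≤
      (HW (G2 ℓ m S) W' x ∩ τ2 ℓ m ⁻¹' {1}).ncard :=
    Set.ncard_le_ncard (Set.inter_subset_inter_left _ hmono) (Set.toFinite _)
  unfold wins2 at hwin ⊢
  rw [hzero]
  exact lt_of_lt_of_le hwin hones
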